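/- Let T = (T₁, T₂, …, T_m, T₁) be a tour on m ≥ 5 positions (indices taken modulo m) with a symmetric weight function w (w(u,v) = w(v,u) for all u, v). Suppose T is a local minimum in the 2-opt neighbourhood, i.e., w(Turn(T, p, q)) ≥ w(T) for all valid 2-opt moves Turn(T, p, q). Then T is also a local minimum in the Swap neighbourhood: for all distinct positions x, y, the tour obtained from T by exchanging the vertices at positions x and y has weight at least w(T). -/

import Mathlib

/-- The weight of a tour `T` on positions `1, …, m` (cyclically):
`∑_{i=1}^{m-1} w (T i) (T (i+1)) + w (T m) (T 1)`. -/
def tourWeight {V : Type*} (m : ℕ) (w : V → V → ℝ) (T : ℕ → V) : ℝ :=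
  (∑ i ∈ Finset.Ico 1 m, w (T i) (T (i + 1))) + w (T m) (T 1)

/-- `Turn T x y` is the tour obtained from `T` by reversing the fragment
`T (x+1), T (x+2), …, T y`. -/
def Turn {V : Type*} (T : ℕ → V) (x y : ℕ) : ℕ → V :=
  fun i => if x + 1 ≤ i ∧ i ≤ y then T (x + y + 1 - i) else T i

/-- `swapPos T x y` exchanges the vertices at positions `x` and `y` of the
tour `T`, leaving all other positions unchanged. -/
def swapPos {V : Type*} (T : ℕ → V) (x y : ℕ) : ℕ → V :=
  fun i => if i = x then T y else if i = y then T x else T i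

lemma turn_in {V : Type*} (T : ℕ → V) {p q i j : ℕ} (h1 : p + 1 ≤ i) (h2 : i ≤ q)
    (h3 : p + q + 1 - i = j) : Turn T p q i = T j := by
  unfold Turn; rw [if_pos ⟨h1, h2⟩, h3]

lemma turn_out {V : Type*} (T : ℕ → V) {p q i : ℕ} (h : i ≤ p ∨ q < i) :
    Turn T p q i = T i := by
  unfold Turn; rw [if_neg (by omega)]

lemma rev_sum {V : Type*} (w : V → V → ℝ) (T : ℕ → V) (hsym : ∀ u v, w u v = w v u)
    (p q : ℕ) :
    ∑ i ∈ Finset.Ico (p+1) q, w (T (p + q + 1 - i)) (T (p + q - i))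
      = ∑ i ∈ Finset.Ico (p+1) q, w (T i) (T (i+1)) := by
  refine Finset.sum_nbij' (fun i => p + q - i) (fun i => p + q - i) ?_ ?_ ?_ ?_ ?_
  · intro a ha; simp only [Finset.mem_Ico] at *; omega
  · intro a ha; simp only [Finset.mem_Ico] at *; omega
  · intro a ha; simp only [Finset.mem_Ico] at ha; omega
  · intro a ha; simp only [Finset.mem_Ico] at ha; omega
  · intro a ha; simp only [Finset.mem_Ico] at ha
    have h1 : p + q + 1 - a = (p + q - a) + 1 := by omega
    rw [h1, hsym]

lemma turn_weight_lt {V : Type*} (w : V → V → ℝ) (T : ℕ → V) (hsym : ∀ u v, w u v = w v u)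
    {m p q : ℕ} (hp : 1 ≤ p) (hpq : p < q) (hq : q < m) :
    tourWeight m w (Turn T p q) + w (T p) (T (p+1)) + w (T q) (T (q+1))
      = tourWeight m w T + w (T p) (T q) + w (T (p+1)) (T (q+1)) := by
  unfold tourWeight
  have hsplit : ∀ S : ℕ → V, ∑ i ∈ Finset.Ico 1 m, w (S i) (S (i+1)) =
      (∑ i ∈ Finset.Ico 1 p, w (S i) (S (i+1)))
      + (∑ i ∈ Finset.Ico p q, w (S i) (S (i+1)))
      + (∑ i ∈ Finset.Ico q m, w (S i) (S (i+1))) := by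
    intro S
    rw [Finset.sum_Ico_consecutive _ (show 1 ≤ p by omega) (show p ≤ q by omega),
        Finset.sum_Ico_consecutive _ (show 1 ≤ q by omega) (show q ≤ m by omega)]
  rw [hsplit, hsplit]
  have e1 : ∑ i ∈ Finset.Ico 1 p, w (Turn T p q i) (Turn T p q (i+1)) =
      ∑ i ∈ Finset.Ico 1 p, w (T i) (T (i+1)) := by
    refine Finset.sum_congr rfl fun i hi => ?_
    simp only [Finset.mem_Ico] at hi
    rw [turn_out T (by omega), turn_out T (by omega)]
  have e2 : ∑ i ∈ Finset.Ico p q, w (Turn T p q i) (Turn T p q (i+1)) =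
      w (T p) (T q) + ∑ i ∈ Finset.Ico (p+1) q, w (T i) (T (i+1)) := by
    rw [Finset.sum_eq_sum_Ico_succ_bot hpq]
    congr 1
    · rw [turn_out T (by omega),
        turn_in T (by omega) (by omega) (show p+q+1-(p+1) = q by omega)]
    · rw [← rev_sum w T hsym p q]
      refine Finset.sum_congr rfl fun i hi => ?_
      simp only [Finset.mem_Ico] at hi
      rw [turn_in T (by omega) (by omega) rfl,
        turn_in T (by omega) (by omega) (show p+q+1-(i+1) = p+q-i by omega)]
  have e3a : ∑ i ∈ Finset.Ico q m, w (Turn T p q i) (Turn T p q (i+1)) =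
      w (T (p+1)) (T (q+1)) + ∑ i ∈ Finset.Ico (q+1) m, w (T i) (T (i+1)) := by
    rw [Finset.sum_eq_sum_Ico_succ_bot hq]
    congr 1
    · rw [turn_in T (by omega) (by omega) (show p+q+1-q = p+1 by omega), turn_out T (by omega)]
    · refine Finset.sum_congr rfl fun i hi => ?_
      simp only [Finset.mem_Ico] at hi
      rw [turn_out T (by omega), turn_out T (by omega)]
  have e3b : ∑ i ∈ Finset.Ico q m, w (T i) (T (i+1)) =
      w (T q) (T (q+1)) + ∑ i ∈ Finset.Ico (q+1) m, w (T i) (T (i+1)) := by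
    rw [Finset.sum_eq_sum_Ico_succ_bot hq]
  have e4 : w (Turn T p q m) (Turn T p q 1) = w (T m) (T 1) := by
    rw [turn_out T (by omega), turn_out T (by omega)]
  have e5 : ∑ i ∈ Finset.Ico p q, w (T i) (T (i+1)) =
      w (T p) (T (p+1)) + ∑ i ∈ Finset.Ico (p+1) q, w (T i) (T (i+1)) := by
    rw [Finset.sum_eq_sum_Ico_succ_bot hpq]
  rw [e1, e2, e3a, e3b, e4, e5]
  ring

lemma turn_weight_eq {V : Type*} (w : V → V → ℝ) (T : ℕ → V) (hsym : ∀ u v, w u v = w v u)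
    {m p : ℕ} (hp : 1 ≤ p) (hpm : p < m) :
    tourWeight m w (Turn T p m) + w (T p) (T (p+1)) + w (T m) (T 1)
      = tourWeight m w T + w (T p) (T m) + w (T (p+1)) (T 1) := by
  unfold tourWeight
  have hsplit : ∀ S : ℕ → V, ∑ i ∈ Finset.Ico 1 m, w (S i) (S (i+1)) =
      (∑ i ∈ Finset.Ico 1 p, w (S i) (S (i+1)))
      + (∑ i ∈ Finset.Ico p m, w (S i) (S (i+1))) := by
    intro S
    rw [Finset.sum_Ico_consecutive _ (show 1 ≤ p by omega) (show p ≤ m by omega)]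
  rw [hsplit, hsplit]
  have e1 : ∑ i ∈ Finset.Ico 1 p, w (Turn T p m i) (Turn T p m (i+1)) =
      ∑ i ∈ Finset.Ico 1 p, w (T i) (T (i+1)) := by
    refine Finset.sum_congr rfl fun i hi => ?_
    simp only [Finset.mem_Ico] at hi
    rw [turn_out T (by omega), turn_out T (by omega)]
  have e2 : ∑ i ∈ Finset.Ico p m, w (Turn T p m i) (Turn T p m (i+1)) =
      w (T p) (T m) + ∑ i ∈ Finset.Ico (p+1) m, w (T i) (T (i+1)) := by
    rw [Finset.sum_eq_sum_Ico_succ_bot hpm]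
    congr 1
    · rw [turn_out T (by omega),
        turn_in T (by omega) (by omega) (show p+m+1-(p+1) = m by omega)]
    · rw [← rev_sum w T hsym p m]
      refine Finset.sum_congr rfl fun i hi => ?_
      simp only [Finset.mem_Ico] at hi
      rw [turn_in T (by omega) (by omega) rfl,
        turn_in T (by omega) (by omega) (show p+m+1-(i+1) = p+m-i by omega)]
  have e4 : w (Turn T p m m) (Turn T p m 1) = w (T (p+1)) (T 1) := by
    rw [turn_in T (by omega) (by omega) (show p+m+1-m = p+1 by omega), turn_out T (by omega)]
  have e5 : ∑ i ∈ Finset.Ico p m, w (T i) (T (i+1)) =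
      w (T p) (T (p+1)) + ∑ i ∈ Finset.Ico (p+1) m, w (T i) (T (i+1)) := by
    rw [Finset.sum_eq_sum_Ico_succ_bot hpm]
  rw [e1, e2, e4, e5]
  ring

lemma swap_a {V : Type*} (T : ℕ → V) (x y : ℕ) : swapPos T x y x = T y := if_pos rfl

lemma swap_b {V : Type*} (T : ℕ → V) {x y : ℕ} (h : x ≠ y) : swapPos T x y y = T x := by
  unfold swapPos
  rw [if_neg (by omega), if_pos rfl]

lemma swap_o {V : Type*} (T : ℕ → V) {x y i : ℕ} (h1 : i ≠ x) (h2 : i ≠ y) :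
    swapPos T x y i = T i := by
  unfold swapPos
  rw [if_neg h1, if_neg h2]

lemma swapS2 {V : Type*} (w : V → V → ℝ) (T : ℕ → V) {m y : ℕ}
    (h3 : 3 ≤ y) (hy : y + 1 ≤ m) :
    tourWeight m w (swapPos T 1 y) + w (T m) (T 1) + w (T 1) (T 2)
        + w (T (y-1)) (T y) + w (T y) (T (y+1))
      = tourWeight m w T + w (T m) (T y) + w (T y) (T 2)
        + w (T (y-1)) (T 1) + w (T 1) (T (y+1)) := by
  unfold tourWeight
  have hy1 : y - 1 + 1 = y := by omega
  have hsplit : ∀ S : ℕ → V, ∑ i ∈ Finset.Ico 1 m, w (S i) (S (i+1)) =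
      w (S 1) (S 2) + (∑ i ∈ Finset.Ico 2 (y-1), w (S i) (S (i+1)))
      + (w (S (y-1)) (S y) + w (S y) (S (y+1)))
      + ∑ i ∈ Finset.Ico (y+1) m, w (S i) (S (i+1)) := by
    intro S
    rw [← Finset.sum_Ico_consecutive _ (show 1 ≤ y+1 by omega) (show y+1 ≤ m by omega),
        ← Finset.sum_Ico_consecutive _ (show 1 ≤ y-1 by omega) (show y-1 ≤ y+1 by omega),
        ← Finset.sum_Ico_consecutive _ (show 1 ≤ 2 by omega) (show 2 ≤ y-1 by omega)]
    have e1 : Finset.Ico 1 2 = {1} := rfl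
    have e2 : Finset.Ico (y-1) (y+1) = ({y-1, y} : Finset ℕ) := by
      ext i
      simp only [Finset.mem_Ico, Finset.mem_insert, Finset.mem_singleton]
      omega
    rw [e1, Finset.sum_singleton, e2, Finset.sum_pair (show y-1 ≠ y by omega), hy1]
  rw [hsplit, hsplit]
  have c1 : ∑ i ∈ Finset.Ico 2 (y-1), w (swapPos T 1 y i) (swapPos T 1 y (i+1)) =
      ∑ i ∈ Finset.Ico 2 (y-1), w (T i) (T (i+1)) := by
    refine Finset.sum_congr rfl fun i hi => ?_
    simp only [Finset.mem_Ico] at hi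
    rw [swap_o T (by omega) (by omega), swap_o T (by omega) (by omega)]
  have c2 : ∑ i ∈ Finset.Ico (y+1) m, w (swapPos T 1 y i) (swapPos T 1 y (i+1)) =
      ∑ i ∈ Finset.Ico (y+1) m, w (T i) (T (i+1)) := by
    refine Finset.sum_congr rfl fun i hi => ?_
    simp only [Finset.mem_Ico] at hi
    rw [swap_o T (by omega) (by omega), swap_o T (by omega) (by omega)]
  rw [c1, c2, swap_a T 1 y, swap_b T (show 1 ≠ y by omega),
      swap_o T (show 2 ≠ 1 by omega) (show 2 ≠ y by omega),
      swap_o T (show y-1 ≠ 1 by omega) (show y-1 ≠ y by omega),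
      swap_o T (show y+1 ≠ 1 by omega) (show y+1 ≠ y by omega),
      swap_o T (show m ≠ 1 by omega) (show m ≠ y by omega)]
  ring

lemma swapS4b {V : Type*} (w : V → V → ℝ) (T : ℕ → V) {m : ℕ} (hm : 5 ≤ m) :
    tourWeight m w (swapPos T 1 2) + w (T m) (T 1) + w (T 2) (T 3) + w (T 1) (T 2)
      = tourWeight m w T + w (T m) (T 2) + w (T 1) (T 3) + w (T 2) (T 1) := by
  unfold tourWeight
  have hsplit : ∀ S : ℕ → V, ∑ i ∈ Finset.Ico 1 m, w (S i) (S (i+1)) =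
      (w (S 1) (S 2) + w (S 2) (S 3))
      + ∑ i ∈ Finset.Ico 3 m, w (S i) (S (i+1)) := by
    intro S
    rw [← Finset.sum_Ico_consecutive _ (show 1 ≤ 3 by omega) (show 3 ≤ m by omega)]
    have e1 : Finset.Ico 1 3 = ({1, 2} : Finset ℕ) := rfl
    rw [e1, Finset.sum_pair (show (1:ℕ) ≠ 2 by omega)]
  rw [hsplit, hsplit]
  have c1 : ∑ i ∈ Finset.Ico 3 m, w (swapPos T 1 2 i) (swapPos T 1 2 (i+1)) =
      ∑ i ∈ Finset.Ico 3 m, w (T i) (T (i+1)) := by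
    refine Finset.sum_congr rfl fun i hi => ?_
    simp only [Finset.mem_Ico] at hi
    rw [swap_o T (by omega) (by omega), swap_o T (by omega) (by omega)]
  rw [c1, swap_a T 1 2, swap_b T (show 1 ≠ 2 by omega),
      swap_o T (show 3 ≠ 1 by omega) (show 3 ≠ 2 by omega),
      swap_o T (show m ≠ 1 by omega) (show m ≠ 2 by omega)]
  ring

lemma swapS5 {V : Type*} (w : V → V → ℝ) (T : ℕ → V) {m : ℕ} (hm : 5 ≤ m) :
    tourWeight m w (swapPos T 1 m) + w (T (m-1)) (T m) + w (T m) (T 1) + w (T 1) (T 2)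
      = tourWeight m w T + w (T (m-1)) (T 1) + w (T 1) (T m) + w (T m) (T 2) := by
  unfold tourWeight
  have hm1 : m - 1 + 1 = m := by omega
  have hsplit : ∀ S : ℕ → V, ∑ i ∈ Finset.Ico 1 m, w (S i) (S (i+1)) =
      w (S 1) (S 2) + (∑ i ∈ Finset.Ico 2 (m-1), w (S i) (S (i+1)))
      + w (S (m-1)) (S m) := by
    intro S
    rw [← Finset.sum_Ico_consecutive _ (show 1 ≤ m-1 by omega) (show m-1 ≤ m by omega),
        ← Finset.sum_Ico_consecutive _ (show 1 ≤ 2 by omega) (show 2 ≤ m-1 by omega)]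
    have e1 : Finset.Ico 1 2 = {1} := rfl
    have e2 : Finset.Ico (m-1) m = {m-1} := by
      ext i
      simp only [Finset.mem_Ico, Finset.mem_singleton]
      omega
    rw [e1, Finset.sum_singleton, e2, Finset.sum_singleton, hm1]
  rw [hsplit, hsplit]
  have c1 : ∑ i ∈ Finset.Ico 2 (m-1), w (swapPos T 1 m i) (swapPos T 1 m (i+1)) =
      ∑ i ∈ Finset.Ico 2 (m-1), w (T i) (T (i+1)) := by
    refine Finset.sum_congr rfl fun i hi => ?_
    simp only [Finset.mem_Ico] at hi
    rw [swap_o T (by omega) (by omega), swap_o T (by omega) (by omega)]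
  rw [c1, swap_a T 1 m, swap_b T (show 1 ≠ m by omega),
      swap_o T (show 2 ≠ 1 by omega) (show 2 ≠ m by omega),
      swap_o T (show m-1 ≠ 1 by omega) (show m-1 ≠ m by omega)]
  ring

lemma swapS3x2 {V : Type*} (w : V → V → ℝ) (T : ℕ → V) {m : ℕ} (hm : 5 ≤ m) :
    tourWeight m w (swapPos T 2 m) + w (T 1) (T 2) + w (T 2) (T 3)
        + w (T (m-1)) (T m) + w (T m) (T 1)
      = tourWeight m w T + w (T 1) (T m) + w (T m) (T 3)
        + w (T (m-1)) (T 2) + w (T 2) (T 1) := by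
  unfold tourWeight
  have hm1 : m - 1 + 1 = m := by omega
  have hsplit : ∀ S : ℕ → V, ∑ i ∈ Finset.Ico 1 m, w (S i) (S (i+1)) =
      (w (S 1) (S 2) + w (S 2) (S 3)) + (∑ i ∈ Finset.Ico 3 (m-1), w (S i) (S (i+1)))
      + w (S (m-1)) (S m) := by
    intro S
    rw [← Finset.sum_Ico_consecutive _ (show 1 ≤ m-1 by omega) (show m-1 ≤ m by omega),
        ← Finset.sum_Ico_consecutive _ (show 1 ≤ 3 by omega) (show 3 ≤ m-1 by omega)]
    have e1 : Finset.Ico 1 3 = ({1, 2} : Finset ℕ) := rfl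
    have e2 : Finset.Ico (m-1) m = {m-1} := by
      ext i
      simp only [Finset.mem_Ico, Finset.mem_singleton]
      omega
    rw [e1, Finset.sum_pair (show (1:ℕ) ≠ 2 by omega), e2, Finset.sum_singleton, hm1]
  rw [hsplit, hsplit]
  have c1 : ∑ i ∈ Finset.Ico 3 (m-1), w (swapPos T 2 m i) (swapPos T 2 m (i+1)) =
      ∑ i ∈ Finset.Ico 3 (m-1), w (T i) (T (i+1)) := by
    refine Finset.sum_congr rfl fun i hi => ?_
    simp only [Finset.mem_Ico] at hi
    rw [swap_o T (by omega) (by omega), swap_o T (by omega) (by omega)]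
  rw [c1, swap_a T 2 m, swap_b T (show 2 ≠ m by omega),
      swap_o T (show 1 ≠ 2 by omega) (show 1 ≠ m by omega),
      swap_o T (show 3 ≠ 2 by omega) (show 3 ≠ m by omega),
      swap_o T (show m-1 ≠ 2 by omega) (show m-1 ≠ m by omega)]
  ring

lemma main_aux {V : Type*} (m : ℕ) (hm : 5 ≤ m) (w : V → V → ℝ)
    (hsym : ∀ u v, w u v = w v u) (T : ℕ → V)
    (hmin : ∀ p q : ℕ, 1 ≤ p → p + 2 ≤ q → q ≤ m → ¬(p = 1 ∧ q = m) →
      tourWeight m w T ≤ tourWeight m w (Turn T p q))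
    (x y : ℕ) (hx1 : 1 ≤ x) (hym : y ≤ m) (hxy : x < y) :
    tourWeight m w T ≤ tourWeight m w (swapPos T x y) := by
  by_cases hadj : y = x + 1
  · subst hadj
    by_cases hx2 : 2 ≤ x
    · -- adjacent swap = Turn (x-1) (x+1)
      have key : swapPos T x (x+1) = Turn T (x-1) (x+1) := by
        funext i
        unfold swapPos Turn
        split_ifs <;> first | rfl | omega | (congr 1; omega)
      rw [key]
      exact hmin (x-1) (x+1) (by omega) (by omega) (by omega) (by omega)
    · -- x = 1, y = 2
      have hx : x = 1 := by omega
      subst hx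
      have h1 := turn_weight_eq w T hsym (show 1 ≤ 2 by omega) (show 2 < m by omega)
      have h2 := swapS4b w T hm
      have g := hmin 2 m (by omega) (by omega) (by omega) (by omega)
      linarith [hsym (T 2) (T m), hsym (T 3) (T 1), hsym (T 2) (T 1)]
  · by_cases hlast : x = 1 ∧ y = m
    · obtain ⟨hx, hy⟩ := hlast
      subst hx
      have hy2 := hy.symm; subst hy2
      have h1 := turn_weight_lt w T hsym (show 1 ≤ 1 by omega)
        (show 1 < m-1 by omega) (show m-1 < m by omega)
      rw [show m-1+1 = m by omega] at h1
      have h2 := swapS5 w T hm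
      have g := hmin 1 (m-1) (by omega) (by omega) (by omega) (by omega)
      linarith [hsym (T 1) (T (m-1)), hsym (T 2) (T m), hsym (T m) (T 1)]
    · have hxy2 : x + 2 ≤ y := by omega
      by_cases hx1' : x = 1
      · -- x = 1, 3 ≤ y ≤ m-1
        subst hx1'
        have hym' : y + 1 ≤ m := by omega
        have h2 := swapS2 w T (show 3 ≤ y by omega) hym'
        have b1 : w (T m) (T 1) + w (T y) (T (y+1)) ≤ w (T m) (T y) + w (T 1) (T (y+1)) := by
          by_cases hc : y + 2 ≤ m
          · have h1 := turn_weight_eq w T hsym (show 1 ≤ y by omega) (show y < m by omega)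
            have g1 := hmin y m (by omega) (by omega) (by omega) (by omega)
            linarith [hsym (T y) (T m), hsym (T (y+1)) (T 1)]
          · rw [show y+1 = m by omega]
            linarith [hsym (T m) (T y), hsym (T m) (T 1)]
        have b2 : w (T 1) (T 2) + w (T (y-1)) (T y) ≤ w (T y) (T 2) + w (T (y-1)) (T 1) := by
          by_cases hc : 4 ≤ y
          · have h3 := turn_weight_lt w T hsym (show 1 ≤ 1 by omega)
              (show 1 < y-1 by omega) (show y-1 < m by omega)
            rw [show y-1+1 = y by omega] at h3
            have g2 := hmin 1 (y-1) (by omega) (by omega) (by omega) (by omega)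
            linarith [hsym (T 1) (T (y-1)), hsym (T 2) (T y)]
          · have hy3 : y = 3 := by omega
            subst hy3
            norm_num
            linarith [hsym (T 1) (T 2), hsym (T 2) (T 3)]
        linarith
      · have hx2 : 2 ≤ x := by omega
        by_cases hs : x = 2 ∧ y = m
        · obtain ⟨hx', hy'⟩ := hs
          subst hx'
          have hy2 := hy'.symm; subst hy2
          have h1 := turn_weight_lt w T hsym (show 1 ≤ 2 by omega)
            (show 2 < m-1 by omega) (show m-1 < m by omega)
          rw [show m-1+1 = m by omega] at h1
          have h2 := swapS3x2 w T hm
          have g := hmin 2 (m-1) (by omega) (by omega) (by omega) (by omega)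
          linarith [hsym (T 1) (T m), hsym (T 2) (T 1), hsym (T m) (T 3),
            hsym (T (m-1)) (T 2), hsym (T 2) (T (m-1)), hsym (T 3) (T m)]
        · -- generic case: 2 ≤ x, x+2 ≤ y ≤ m, ¬(x=2 ∧ y=m)
          have key : swapPos T x y = Turn (Turn T (x-1) y) x (y-1) := by
            funext i
            unfold swapPos Turn
            split_ifs <;> first | rfl | omega | (congr 1; omega)
          set U := Turn T (x-1) y with hU
          have ux : U x = T y := turn_in T (by omega) (by omega) (by omega)
          have ux1 : U (x+1) = T (y-1) := turn_in T (by omega) (by omega) (by omega)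
          have uy1 : U (y-1) = T (x+1) := turn_in T (by omega) (by omega) (by omega)
          have uy : U y = T x := turn_in T (by omega) (by omega) (by omega)
          have h2 := turn_weight_lt w U hsym (show 1 ≤ x by omega)
            (show x < y-1 by omega) (show y-1 < m by omega)
          rw [show y-1+1 = y by omega, ux, ux1, uy1, uy, ← key] at h2
          have g1 := hmin (x-1) y (by omega) (by omega) (by omega) (by omega)
          rw [← hU] at g1
          have h3 := turn_weight_lt w T hsym (show 1 ≤ x by omega)
            (show x < y-1 by omega) (show y-1 < m by omega)
          rw [show y-1+1 = y by omega] at h3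
          have g2 : tourWeight m w T ≤ tourWeight m w (Turn T x (y-1)) := by
            by_cases hy3 : x + 3 ≤ y
            · exact hmin x (y-1) (by omega) (by omega) (by omega) (by omega)
            · have heq : Turn T x (y-1) = T := by
                funext i
                unfold Turn
                split_ifs with h
                · congr 1; omega
                · rfl
              rw [heq]
          linarith [hsym (T y) (T (y-1)), hsym (T (x+1)) (T x),
            hsym (T x) (T (y-1)), hsym (T (x+1)) (T y),
            hsym (T y) (T (x+1)), hsym (T (y-1)) (T x)]

/-- Let `T` be a tour on `m ≥ 5` positions with a symmetric weight function
`w`.  If `T` is a local minimum in the 2-opt neighbourhood (i.e., no valid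
2-opt move `Turn T p q` — removing two distinct, non-adjacent edges — gives a
lighter tour), then `T` is also a local minimum in the Swap neighbourhood:
exchanging the vertices at any two distinct positions does not decrease the
tour weight. -/
theorem stmt_6 {V : Type*} (m : ℕ) (hm : 5 ≤ m) (w : V → V → ℝ)
    (hsym : ∀ u v, w u v = w v u) (T : ℕ → V)
    (hmin : ∀ p q : ℕ, 1 ≤ p → p + 2 ≤ q → q ≤ m → ¬(p = 1 ∧ q = m) →
      tourWeight m w T ≤ tourWeight m w (Turn T p q)) :
    ∀ x y : ℕ, 1 ≤ x → x ≤ m → 1 ≤ y → y ≤ m → x ≠ y →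
      tourWeight m w T ≤ tourWeight m w (swapPos T x y) := by
  intro x y hx1 hxm hy1 hym hxy
  rcases Nat.lt_or_ge x y with h | h
  · exact main_aux m hm w hsym T hmin x y hx1 hym h
  · have h' : y < x := by omega
    have hcomm : swapPos T x y = swapPos T y x := by
      funext i
      unfold swapPos
      split_ifs <;> first | rfl | (congr 1; omega)
    rw [hcomm]
    exact main_aux m hm w hsym T hmin y x hy1 hxm h'
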